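/- arXiv:2403.15381 — 5 statements merged into one kernel-verified Lean document; each statement's English description precedes it below -/
import Mathlib

section
/- The Lie bracket [W_{ij}, W_{kr}] equals (-1)^{k-r+1}(δ_{jk} V_{ir} + δ_{jr} V_{ik} + δ_{ik} V_{jr} + δ_{ir} V_{jk}). -/
open Matrix

noncomputable section

/-- `V_{ij} = [[E_{ij} + (-1)^{i-j+1} E_{ji}, 0], [0, (-1)^{i-j} E_{ij} - E_{ji}]]`. -/
def Vmat (N : ℕ) (i j : Fin N) : Matrix (Fin N ⊕ Fin N) (Fin N ⊕ Fin N) ℝ :=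
  Matrix.fromBlocks
    (Matrix.single i j 1 +
      ((-1 : ℝ) ^ (((i : ℕ) : ℤ) - ((j : ℕ) : ℤ) + 1)) • Matrix.single j i 1)
    0 0
    (((-1 : ℝ) ^ (((i : ℕ) : ℤ) - ((j : ℕ) : ℤ))) • Matrix.single i j 1 -
      Matrix.single j i 1)

/-- `W_{ij} = [[0, E_{ij}+E_{ji}], [(-1)^{i-j+1}(E_{ij}+E_{ji}), 0]]`. -/
def Wmat (N : ℕ) (i j : Fin N) : Matrix (Fin N ⊕ Fin N) (Fin N ⊕ Fin N) ℝ :=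
  Matrix.fromBlocks 0
    (Matrix.single i j 1 + Matrix.single j i 1)
    (((-1 : ℝ) ^ (((i : ℕ) : ℤ) - ((j : ℕ) : ℤ) + 1)) •
      (Matrix.single i j 1 + Matrix.single j i 1))
    0

lemma Emul {N : ℕ} (a b c d : Fin N) :
    (Matrix.single a b 1 : Matrix (Fin N) (Fin N) ℝ) * Matrix.single c d 1 =
      if b = c then Matrix.single a d 1 else 0 := by
  split_ifs with h
  · subst h; simpa using Matrix.single_mul_single_same a b (1:ℝ) d 1
  · exact Matrix.single_mul_single_of_ne (c := 1) a b c h 1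

lemma hpow (a b : ℕ) : (-1:ℝ)^((a:ℤ)-(b:ℤ)) = (-1)^a * (-1)^b := by
  rw [zpow_sub₀ (by norm_num), zpow_natCast, zpow_natCast, div_eq_mul_inv, ← inv_pow]
  norm_num

lemma hpow1 (a b : ℕ) : (-1:ℝ)^((a:ℤ)-(b:ℤ)+1) = -((-1)^a * (-1)^b) := by
  rw [zpow_add_one₀ (by norm_num), hpow]; ring

lemma h2 (n:ℕ) : ((-1:ℝ)^n)^2 = 1 := by rw [← pow_mul, mul_comm, pow_mul]; norm_num
lemma h3 (n:ℕ) : ((-1:ℝ)^n)^3 = (-1)^n := by rw [← pow_mul, mul_comm, pow_mul]; norm_num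
lemma h4 (n:ℕ) : ((-1:ℝ)^n)^4 = 1 := by rw [← pow_mul, mul_comm, pow_mul]; norm_num

lemma fromBlocks_sub' {N : ℕ} (A B C D A' B' C' D' : Matrix (Fin N) (Fin N) ℝ) :
    Matrix.fromBlocks A B C D - Matrix.fromBlocks A' B' C' D' =
      Matrix.fromBlocks (A - A') (B - B') (C - C') (D - D') := by
  ext (x|x) (y|y) <;> simp [Matrix.fromBlocks]

set_option maxHeartbeats 1000000 in
/-- `[W_{ij}, W_{kr}] = (-1)^{k-r+1}(δ_{jk} V_{ir} + δ_{jr} V_{ik}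
+ δ_{ik} V_{jr} + δ_{ir} V_{jk})`. -/
theorem stmt6 (N : ℕ) (hN : 1 ≤ N) (i j k r : Fin N) :
    Wmat N i j * Wmat N k r - Wmat N k r * Wmat N i j =
      ((-1 : ℝ) ^ (((k : ℕ) : ℤ) - ((r : ℕ) : ℤ) + 1)) •
        ((if j = k then (1 : ℝ) else 0) • Vmat N i r +
          (if j = r then (1 : ℝ) else 0) • Vmat N i k +
          (if i = k then (1 : ℝ) else 0) • Vmat N j r +
          (if i = r then (1 : ℝ) else 0) • Vmat N j k) := by
  simp only [Wmat, Vmat, Matrix.fromBlocks_multiply, Matrix.smul_mul, Matrix.mul_smul,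
    add_mul, mul_add, Emul, hpow, hpow1,
    Matrix.fromBlocks_smul, Matrix.fromBlocks_add, smul_add, smul_smul, smul_zero,
    mul_zero, zero_mul, add_zero, zero_add, mul_one, one_mul, one_smul, zero_smul]
  rw [fromBlocks_sub']
  rw [Matrix.fromBlocks_inj]
  refine ⟨?_, by simp, by simp, ?_⟩ <;>
  · split_ifs <;> subst_vars <;>
      first
      | exact absurd rfl (by assumption)
      | (match_scalars <;> ring_nf <;> simp [pow_mul, h2, h3, h4])

end
end

section
/- Any matrix M ∈ SpO_N'(R) ∩ SO_{2N}(R) is block diagonal: M = [[A,0],[0,D]] with A ∈ Sp_{k/2}(R) ∩ SO_k(R) and D ∈ Sp_{k'/2}(R) ∩ SO_{k'}(R), where k = k' = N for even N and k = N+1, k' = N-1 for odd N. -/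
open Matrix

noncomputable section

/-- The standard symplectic form `[[0,-I_m],[I_m,0]]` on `ℝ^{2m}`. -/
def Jstd (m : ℕ) : Matrix (Fin m ⊕ Fin m) (Fin m ⊕ Fin m) ℝ :=
  Matrix.fromBlocks 0 (-1) 1 0

variable {n : Type*} [Fintype n] [DecidableEq n]

lemma det_complexStruct_nonneg (P Q : Matrix n n ℝ) :
    0 ≤ (Matrix.fromBlocks P Q (-Q) P).det := by
  set f : ℝ →+* ℂ := Complex.ofRealHom with hf
  set Pc := P.map f
  set Qc := Q.map f
  have hmap : ((Matrix.fromBlocks P Q (-Q) P).map f)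
      = Matrix.fromBlocks Pc Qc (-Qc) Pc := by
    ext i j
    cases i <;> cases j <;> simp [Matrix.fromBlocks, Pc, Qc, Matrix.map_apply]
  set T : Matrix (n ⊕ n) (n ⊕ n) ℂ :=
    Matrix.fromBlocks 1 ((Complex.I : ℂ) • 1) (Complex.I • 1) 1 with hT
  set D : Matrix (n ⊕ n) (n ⊕ n) ℂ :=
    Matrix.fromBlocks (Pc + Complex.I • Qc) 0 0 (Pc - Complex.I • Qc) with hD
  have hcomm : (Matrix.fromBlocks Pc Qc (-Qc) Pc) * T = T * D := by
    rw [hT, hD, Matrix.fromBlocks_multiply, Matrix.fromBlocks_multiply]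
    simp only [Matrix.mul_one, Matrix.one_mul, Matrix.mul_zero, Matrix.zero_mul,
      Matrix.mul_smul, Matrix.smul_mul, smul_smul, Complex.I_mul_I, smul_sub, smul_add,
      add_zero, zero_add, neg_one_smul, neg_neg, Matrix.neg_mul, Matrix.one_mul]
    rw [Matrix.fromBlocks_inj]
    refine ⟨rfl, by abel, by abel, by rw [smul_neg]; abel⟩
  have hdetT : T.det = 2 ^ Fintype.card n := by
    rw [hT, Matrix.det_fromBlocks_one₁₁]
    have : (1 : Matrix n n ℂ) - Complex.I • 1 * (Complex.I • 1) = (2 : ℂ) • 1 := by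
      simp [Matrix.smul_mul, Matrix.mul_smul, smul_smul, Complex.I_mul_I, two_smul]
      try abel
    rw [this, Matrix.det_smul, Matrix.det_one, mul_one]
  have hdetT0 : T.det ≠ 0 := by
    rw [hdetT]; exact pow_ne_zero _ two_ne_zero
  have hdets : (Matrix.fromBlocks Pc Qc (-Qc) Pc).det * T.det = T.det * D.det := by
    rw [← Matrix.det_mul, ← Matrix.det_mul, hcomm]
  have hAD : (Matrix.fromBlocks Pc Qc (-Qc) Pc).det = D.det := by
    rw [mul_comm] at hdets
    exact mul_left_cancel₀ hdetT0 hdets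
  have hDdet : D.det = (Pc + Complex.I • Qc).det * (Pc - Complex.I • Qc).det := by
    rw [hD, Matrix.det_fromBlocks_zero₂₁]
  have hconj : (Pc - Complex.I • Qc) = (Pc + Complex.I • Qc).map (starRingEnd ℂ) := by
    ext i j
    simp [Pc, Qc, Complex.conj_ofReal, hf, sub_eq_add_neg]
  have hconjdet : (Pc - Complex.I • Qc).det = starRingEnd ℂ ((Pc + Complex.I • Qc).det) := by
    rw [hconj, ← RingHom.mapMatrix_apply, ← RingHom.map_det]
  have hmapdet : ((Matrix.fromBlocks P Q (-Q) P).det : ℂ)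
      = ((Complex.normSq ((Pc + Complex.I • Qc).det) : ℝ) : ℂ) := by
    have h1 := RingHom.map_det f (Matrix.fromBlocks P Q (-Q) P)
    rw [RingHom.mapMatrix_apply, hmap, hAD, hDdet, hconjdet, Complex.mul_conj] at h1
    simpa [hf] using h1
  have heq : (Matrix.fromBlocks P Q (-Q) P).det
      = Complex.normSq ((Pc + Complex.I • Qc).det) := by exact_mod_cast hmapdet
  rw [heq]; exact Complex.normSq_nonneg _

lemma det_eq_one_of_orth_symp (X : Matrix (n ⊕ n) (n ⊕ n) ℝ)
    (hs : Xᵀ * Matrix.fromBlocks 0 (-1) 1 0 * X = Matrix.fromBlocks 0 (-1) 1 0)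
    (ho : Xᵀ * X = 1) : X.det = 1 := by
  set J : Matrix (n ⊕ n) (n ⊕ n) ℝ := Matrix.fromBlocks 0 (-1) 1 0 with hJ
  have hinv : X * Xᵀ = 1 := mul_eq_one_comm.mp ho
  have hcomm : J * X = X * J := by
    have h := congrArg (X * ·) hs
    rw [← Matrix.mul_assoc, ← Matrix.mul_assoc, hinv, Matrix.one_mul] at h
    exact h
  set P := X.toBlocks₁₁; set Q := X.toBlocks₁₂; set R := X.toBlocks₂₁; set S := X.toBlocks₂₂
  have hX : X = Matrix.fromBlocks P Q R S := (Matrix.fromBlocks_toBlocks X).symm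
  rw [hX, hJ, Matrix.fromBlocks_multiply, Matrix.fromBlocks_multiply] at hcomm
  simp only [Matrix.zero_mul, Matrix.mul_zero, Matrix.one_mul, Matrix.mul_one,
    Matrix.neg_mul, Matrix.mul_neg, zero_add, add_zero, Matrix.fromBlocks_inj] at hcomm
  obtain ⟨h1, h2, h3, h4⟩ := hcomm
  have hR : R = -Q := by rw [← h1, neg_neg]
  have hS : S = P := h3.symm
  have hX' : X = Matrix.fromBlocks P Q (-Q) P := by rw [hX, hR, hS]
  have hnonneg : 0 ≤ X.det := by rw [hX']; exact det_complexStruct_nonneg P Q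
  have hsq : X.det * X.det = 1 := by
    have := congrArg Matrix.det ho
    rwa [Matrix.det_mul, Matrix.det_transpose, Matrix.det_one] at this
  nlinarith [hnonneg, hsq]

/-- a matrix of `SpO_N'(ℝ) ∩ SO_{2N}(ℝ)` is block diagonal,
`M = [[A,0],[0,D]]` with `A ∈ Sp_{k/2}(ℝ) ∩ SO_k(ℝ)` and `D ∈ Sp_{k'/2}(ℝ) ∩ SO_{k'}(ℝ)`,
where `k = 2m`, `k' = 2m'`, with `m = m'` (so `k = k' = N`) when `N` is even and
`m = m' + 1` (so `k = N+1`, `k' = N-1`) when `N` is odd. -/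
theorem stmt8 (N m m' : ℕ) (hN : 1 ≤ N) (hsum : m + m' = N)
    (heven : Even N → m = m') (hodd : Odd N → m = m' + 1)
    (M : Matrix ((Fin m ⊕ Fin m) ⊕ (Fin m' ⊕ Fin m'))
      ((Fin m ⊕ Fin m) ⊕ (Fin m' ⊕ Fin m')) ℝ)
    (J' S' : Matrix ((Fin m ⊕ Fin m) ⊕ (Fin m' ⊕ Fin m'))
      ((Fin m ⊕ Fin m) ⊕ (Fin m' ⊕ Fin m')) ℝ)
    (hJ' : J' = Matrix.fromBlocks (Jstd m) 0 0 (Jstd m'))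
    (hS' : S' = Matrix.fromBlocks 1 0 0 (-1))
    (hsymp : Mᵀ * J' * M = J') (hSinv : Mᵀ * S' * M = S')
    (horth : Mᵀ * M = 1) (hdet : M.det = 1) :
    M.toBlocks₁₂ = 0 ∧ M.toBlocks₂₁ = 0 ∧
    (M.toBlocks₁₁ᵀ * Jstd m * M.toBlocks₁₁ = Jstd m ∧
      M.toBlocks₁₁ᵀ * M.toBlocks₁₁ = 1 ∧ M.toBlocks₁₁.det = 1) ∧
    (M.toBlocks₂₂ᵀ * Jstd m' * M.toBlocks₂₂ = Jstd m' ∧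
      M.toBlocks₂₂ᵀ * M.toBlocks₂₂ = 1 ∧ M.toBlocks₂₂.det = 1) := by
  subst hJ' hS'
  have hinv : M * Mᵀ = 1 := mul_eq_one_comm.mp horth
  have hcomm : Matrix.fromBlocks 1 0 0 (-1) * M = M * Matrix.fromBlocks 1 0 0 (-1) := by
    have h := congrArg (M * ·) hSinv
    rw [← Matrix.mul_assoc, ← Matrix.mul_assoc, hinv, Matrix.one_mul] at h
    exact h
  set A := M.toBlocks₁₁ with hA
  set B := M.toBlocks₁₂ with hB
  set C := M.toBlocks₂₁ with hC
  set D := M.toBlocks₂₂ with hD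
  have hM : M = Matrix.fromBlocks A B C D := (Matrix.fromBlocks_toBlocks M).symm
  rw [hM, Matrix.fromBlocks_multiply, Matrix.fromBlocks_multiply] at hcomm
  simp only [Matrix.zero_mul, Matrix.mul_zero, Matrix.one_mul, Matrix.mul_one,
    Matrix.neg_mul, Matrix.mul_neg, zero_add, add_zero, Matrix.fromBlocks_inj] at hcomm
  obtain ⟨_, hB2, hC2, _⟩ := hcomm
  have hB0 : B = 0 := by
    ext i j
    have := congrFun (congrFun hB2 i) j
    simp only [Matrix.neg_apply] at this
    simp only [Matrix.zero_apply]
    linarith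
  have hC0 : C = 0 := by
    ext i j
    have := congrFun (congrFun hC2 i) j
    simp only [Matrix.neg_apply] at this
    simp only [Matrix.zero_apply]
    linarith
  have hM0 : M = Matrix.fromBlocks A 0 0 D := by rw [hM, hB0, hC0]
  rw [hM0] at hsymp horth hdet
  rw [Matrix.fromBlocks_transpose, Matrix.transpose_zero, Matrix.fromBlocks_multiply,
    Matrix.fromBlocks_multiply] at hsymp
  rw [Matrix.fromBlocks_transpose, Matrix.transpose_zero, Matrix.fromBlocks_multiply] at horth
  rw [show (1 : Matrix ((Fin m ⊕ Fin m) ⊕ (Fin m' ⊕ Fin m'))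
      ((Fin m ⊕ Fin m) ⊕ (Fin m' ⊕ Fin m')) ℝ) = Matrix.fromBlocks 1 0 0 1 from
    Matrix.fromBlocks_one.symm] at horth
  simp only [Matrix.zero_mul, Matrix.mul_zero, zero_add, add_zero, Matrix.transpose_zero,
    Matrix.fromBlocks_inj] at hsymp horth
  obtain ⟨hsA, _, _, hsD⟩ := hsymp
  obtain ⟨hoA, _, _, hoD⟩ := horth
  have hJm : Jstd m = Matrix.fromBlocks 0 (-1) 1 0 := rfl
  have hJm' : Jstd m' = Matrix.fromBlocks 0 (-1) 1 0 := rfl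
  have hdetA : A.det = 1 := det_eq_one_of_orth_symp A (by rw [← hJm]; exact hsA) hoA
  have hdetD : D.det = 1 := det_eq_one_of_orth_symp D (by rw [← hJm']; exact hsD) hoD
  exact ⟨hB0, hC0, ⟨hsA, hoA, hdetA⟩, ⟨hsD, hoD, hdetD⟩⟩

end
end

section
/- Let ψ₁, ψ₂ : R → C^{2N} be solutions of J ψᵢ' + Vᵢ ψᵢ = 0 with ψ₁(y) = ψ₂(y) for some y ∈ R. Then for all x ∈ R, |ψ₁(x) - ψ₂(x)| ≤ |ψ₂(y)| · exp(∫_{min(x,y)}^{max(x,y)} (‖V₁(t)‖ + ‖V₂(t)‖) dt) · ∫_{min(x,y)}^{max(x,y)} ‖V₁(s) - V₂(s)‖ ds. -/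
/-!
Since `J² = -1` and `J` is unitary, `Jψ' + Vψ = 0` reads `ψ' = (JV)ψ` with `‖JV‖ = ‖V‖`. The
difference `φ = ψ₁ - ψ₂` vanishes at `y` and solves `φ' = (JV₁)φ + J(V₁ - V₂)ψ₂`, so Grönwall's
inequality with the integrable coefficient `‖V₁‖` bounds `|φ(x)|` by
`exp(∫‖V₁‖) ∫‖V₁ - V₂‖ |ψ₂|`; Grönwall once more gives `|ψ₂| ≤ |ψ₂(y)| exp(∫‖V₂‖)` on the interval.

Grönwall's inequality for a merely integrable coefficient `a` is proved by maximising
`u · exp(-∫a)`; this needs `∫ a exp(∫a) = exp(∫a) - 1`, the fundamental theorem of calculus for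
the absolutely continuous function `exp ∘ ∫a`.
-/

open Matrix MeasureTheory intervalIntegral

noncomputable section

/-- The matrix `J = [[0,-I_N],[I_N,0]]` with complex entries. -/
def Jc (N : ℕ) : Matrix (Fin N ⊕ Fin N) (Fin N ⊕ Fin N) ℂ :=
  Matrix.fromBlocks 0 (-1) 1 0

/-- The operator norm of a complex matrix, acting on the Euclidean space. -/
def opNorm {n : Type*} [Fintype n] [DecidableEq n] (A : Matrix n n ℂ) : ℝ :=
  ‖Matrix.toEuclideanCLM (𝕜 := ℂ) A‖

open Set Filter Real
open scoped Interval

theorem LipschitzOnWith.comp_absolutelyContinuousOnInterval {X Y : Type*}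
    [PseudoMetricSpace X] [PseudoMetricSpace Y] {g : X → Y} {K : NNReal} {f : ℝ → X} {a b : ℝ}
    (hg : LipschitzOnWith K g (f '' uIcc a b)) (hf : AbsolutelyContinuousOnInterval f a b) :
    AbsolutelyContinuousOnInterval (g ∘ f) a b := by
  refine squeeze_zero' (.of_forall fun _ ↦ Finset.sum_nonneg fun _ _ ↦ dist_nonneg) ?_
    (by simpa using (tendsto_const_nhds (x := (K : ℝ))).mul hf)
  rw [eventually_inf_principal]
  filter_upwards with E hE
  rw [Finset.mul_sum]
  gcongr with i hi
  exact hg.dist_le_mul _ (mem_image_of_mem f (hE.1 i hi).1) _ (mem_image_of_mem f (hE.1 i hi).2)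

theorem ContDiff.comp_absolutelyContinuousOnInterval {F : Type*} [NormedAddCommGroup F]
    [NormedSpace ℝ F] {g : ℝ → F} {f : ℝ → ℝ} {a b : ℝ} (hg : ContDiff ℝ 1 g)
    (hf : AbsolutelyContinuousOnInterval f a b) :
    AbsolutelyContinuousOnInterval (g ∘ f) a b := by
  obtain ⟨K, hK⟩ := hg.locallyLipschitz.locallyLipschitzOn.exists_lipschitzOnWith_of_compact
    (isCompact_uIcc.image_of_continuousOn hf.continuousOn)
  exact hK.comp_absolutelyContinuousOnInterval hf

theorem integral_deriv_comp_primitive_mul {f g : ℝ → ℝ} {a b : ℝ}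
    (hf : IntervalIntegrable f volume a b) (hg : ContDiff ℝ 1 g) :
    ∫ x in a..b, deriv g (∫ t in a..x, f t) * f x = g (∫ t in a..b, f t) - g 0 := by
  have hF := hf.absolutelyContinuousOnInterval_intervalIntegral left_mem_uIcc
  have hFTC := (hg.comp_absolutelyContinuousOnInterval hF).integral_deriv_eq_sub
  simp only [Function.comp_apply, integral_same] at hFTC
  rw [← hFTC]
  refine integral_congr_ae ?_
  filter_upwards [hf.ae_hasDerivAt_integral] with x hx hxab
  have hx := hx (uIoc_subset_uIcc hxab) a left_mem_uIcc
  exact ((hg.differentiable one_ne_zero _).hasDerivAt.comp x hx).deriv.symm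

theorem setIntegral_uIoc_mul_exp {a : ℝ → ℝ} {y t : ℝ} (ha : IntervalIntegrable a volume y t) :
    ∫ s in Ι y t, a s * exp (∫ r in Ι y s, a r) = exp (∫ r in Ι y t, a r) - 1 := by
  have hexp (f : ℝ → ℝ) (hf : IntervalIntegrable f volume y t) :
      ∫ s in y..t, f s * exp (∫ r in y..s, f r) = exp (∫ r in y..t, f r) - 1 := by
    simpa [mul_comm] using integral_deriv_comp_primitive_mul hf contDiff_exp
  have hIoc {u v : ℝ} (huv : u ≤ v) : ∫ r in Ι u v, a r = ∫ r in u..v, a r := by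
    rw [uIoc_of_le huv, integral_of_le huv]
  have hIoc' {u v : ℝ} (hvu : v ≤ u) : ∫ r in Ι u v, a r = ∫ r in u..v, -a r := by
    rw [uIoc_of_ge hvu, intervalIntegral.integral_neg, integral_symm, neg_neg, integral_of_le hvu]
  rcases le_total y t with hyt | hty
  · calc ∫ s in Ι y t, a s * exp (∫ r in Ι y s, a r)
          = ∫ s in y..t, a s * exp (∫ r in y..s, a r) := by
            rw [integral_of_le hyt, uIoc_of_le hyt]
            exact setIntegral_congr_fun measurableSet_Ioc fun s hs ↦ by rw [hIoc hs.1.le]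
      _ = exp (∫ r in Ι y t, a r) - 1 := by rw [hexp a ha, hIoc hyt]
  · calc ∫ s in Ι y t, a s * exp (∫ r in Ι y s, a r)
          = -∫ s in y..t, a s * exp (∫ r in y..s, -a r) := by
            rw [← integral_symm, integral_of_le hty, uIoc_of_ge hty]
            exact setIntegral_congr_fun measurableSet_Ioc fun s hs ↦ by rw [hIoc' hs.2]
      _ = ∫ s in y..t, -a s * exp (∫ r in y..s, -a r) := by
            rw [← intervalIntegral.integral_neg]
            simp only [neg_mul]
      _ = exp (∫ r in Ι y t, a r) - 1 := by rw [hexp (fun s ↦ -a s) ha.neg, hIoc' hty]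

theorem le_mul_exp_of_le_add_setIntegral_uIoc {a u : ℝ → ℝ} {B y x : ℝ} (ha : ∀ t, 0 ≤ a t)
    (ha_int : IntervalIntegrable a volume y x) (hu : ContinuousOn u (uIcc y x))
    (h : ∀ t ∈ uIcc y x, u t ≤ B + ∫ s in Ι y t, a s * u s) :
    u x ≤ B * exp (∫ s in Ι y x, a s) := by
  set A : ℝ → ℝ := fun t ↦ ∫ s in Ι y t, a s
  have hA : ContinuousOn A (uIcc y x) := by
    refine (continuousOn_primitive_interval' ha_int left_mem_uIcc).abs.congr fun t _ ↦ ?_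
    show ∫ s in Ι y t, a s = |∫ s in y..t, a s|
    rw [abs_integral_eq_abs_integral_uIoc,
      abs_of_nonneg (setIntegral_nonneg measurableSet_uIoc fun s _ ↦ ha s)]
  -- `u * exp (-A)` attains its maximum `C` at some `t₀`; the hypothesis at `t₀` forces `C ≤ B`.
  obtain ⟨t₀, ht₀, hmax⟩ := isCompact_uIcc.exists_isMaxOn nonempty_uIcc
    (hu.mul (continuous_exp.comp_continuousOn hA.neg))
  set C := u t₀ * exp (-A t₀)
  have hle : ∀ t ∈ uIcc y x, u t ≤ C * exp (A t) := fun t ht ↦ by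
    have hCt : u t * exp (-A t) ≤ C := hmax ht
    rwa [Real.exp_neg, ← div_eq_mul_inv, div_le_iff₀ (exp_pos _)] at hCt
  have hsub : uIcc y t₀ ⊆ uIcc y x := uIcc_subset_uIcc_left ht₀
  have ha₀ : IntervalIntegrable a volume y t₀ := ha_int.mono_set hsub
  have hCB : C ≤ B := by
    have hut₀ : u t₀ = C * exp (A t₀) := by
      simp only [C, mul_assoc, ← exp_add, neg_add_cancel, exp_zero, mul_one]
    have key := calc
      u t₀ ≤ B + ∫ s in Ι y t₀, a s * u s := h t₀ ht₀
      _ ≤ B + ∫ s in Ι y t₀, C * (a s * exp (A s)) := by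
        gcongr B + ?_
        refine setIntegral_mono_on (ha₀.mul_continuousOn (hu.mono hsub)).def'
          ((ha₀.mul_continuousOn ?_).def'.const_mul C) measurableSet_uIoc fun s hs ↦ ?_
        · exact continuous_exp.comp_continuousOn (hA.mono hsub)
        · rw [mul_left_comm]
          exact mul_le_mul_of_nonneg_left (hle s (hsub (uIoc_subset_uIcc hs))) (ha s)
      _ = B + C * (exp (A t₀) - 1) := by
        rw [MeasureTheory.integral_const_mul, setIntegral_uIoc_mul_exp ha₀]
    linarith
  calc u x ≤ C * exp (A x) := hle x right_mem_uIcc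
    _ ≤ B * exp (A x) := by gcongr

section LinearODE

variable {E : Type*} [NormedAddCommGroup E] [NormedSpace ℝ E]

theorem continuousOn_of_sub_eq_integral {φ φ' : ℝ → E} {y x : ℝ}
    (hφ : ∀ t ∈ uIcc y x, φ t - φ y = ∫ s in y..t, φ' s) (hφ' : IntervalIntegrable φ' volume y x) :
    ContinuousOn φ (uIcc y x) :=
  (continuousOn_const.add (continuousOn_primitive_interval' hφ' left_mem_uIcc)).congr
    fun t ht ↦ sub_eq_iff_eq_add'.mp (hφ t ht)

theorem norm_le_mul_exp_of_norm_deriv_le {φ φ' : ℝ → E} {a b : ℝ → ℝ} {y x : ℝ}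
    (hφ : ∀ t ∈ uIcc y x, φ t - φ y = ∫ s in y..t, φ' s) (hφ' : IntervalIntegrable φ' volume y x)
    (ha : ∀ t, 0 ≤ a t) (ha_int : IntervalIntegrable a volume y x)
    (hb : ∀ t, 0 ≤ b t) (hb_int : IntervalIntegrable b volume y x)
    (hbound : ∀ᵐ t, ‖φ' t‖ ≤ a t * ‖φ t‖ + b t) :
    ‖φ x‖ ≤ (‖φ y‖ + ∫ s in Ι y x, b s) * exp (∫ s in Ι y x, a s) := by
  have hnorm : ContinuousOn (fun t ↦ ‖φ t‖) (uIcc y x) :=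
    continuous_norm.comp_continuousOn (continuousOn_of_sub_eq_integral hφ hφ')
  refine le_mul_exp_of_le_add_setIntegral_uIoc ha ha_int hnorm fun t ht ↦ ?_
  have hsub : Ι y t ⊆ Ι y x := uIoc_subset_uIoc_of_uIcc_subset_uIcc (uIcc_subset_uIcc_left ht)
  have hau : IntegrableOn (fun s ↦ a s * ‖φ s‖) (Ι y t) :=
    (ha_int.mul_continuousOn hnorm).def'.mono_set hsub
  have hb_t : IntegrableOn b (Ι y t) := hb_int.def'.mono_set hsub
  calc ‖φ t‖ ≤ ‖φ y‖ + ‖φ t - φ y‖ := norm_le_insert' _ _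
    _ ≤ ‖φ y‖ + ∫ s in Ι y t, ‖φ' s‖ := by
      rw [hφ t ht]
      gcongr
      exact norm_integral_le_integral_norm_uIoc
    _ ≤ ‖φ y‖ + ∫ s in Ι y t, (b s + a s * ‖φ s‖) := by
      gcongr ‖φ y‖ + ?_
      refine integral_mono_ae (hφ'.def'.mono_set hsub).norm (hb_t.add hau) ?_
      filter_upwards [ae_restrict_of_ae hbound] with s hs
      linarith
    _ = ‖φ y‖ + (∫ s in Ι y t, b s) + ∫ s in Ι y t, a s * ‖φ s‖ := by
      rw [integral_add hb_t hau, add_assoc]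
    _ ≤ ‖φ y‖ + (∫ s in Ι y x, b s) + ∫ s in Ι y t, a s * ‖φ s‖ := by
      linarith [setIntegral_mono_set hb_int.def' (.of_forall fun s ↦ hb s) hsub.eventuallyLE]

variable {𝕜 : Type*} [NontriviallyNormedField 𝕜] [NormedSpace 𝕜 E]

theorem norm_sub_le_of_linear_ode {L₁ L₂ : ℝ → E →L[𝕜] E} {φ₁ φ₁' φ₂ φ₂' : ℝ → E} {y x : ℝ}
    (hφ₁ : ∀ t ∈ uIcc y x, φ₁ t - φ₁ y = ∫ s in y..t, φ₁' s)
    (hφ₂ : ∀ t ∈ uIcc y x, φ₂ t - φ₂ y = ∫ s in y..t, φ₂' s)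
    (hφ₁' : IntervalIntegrable φ₁' volume y x) (hφ₂' : IntervalIntegrable φ₂' volume y x)
    (hL₁ : IntervalIntegrable (fun t ↦ ‖L₁ t‖) volume y x)
    (hL₂ : IntervalIntegrable (fun t ↦ ‖L₂ t‖) volume y x)
    (hL : IntervalIntegrable (fun t ↦ ‖L₁ t - L₂ t‖) volume y x)
    (h₁ : ∀ᵐ t, φ₁' t = L₁ t (φ₁ t)) (h₂ : ∀ᵐ t, φ₂' t = L₂ t (φ₂ t)) (hy : φ₁ y = φ₂ y) :
    ‖φ₁ x - φ₂ x‖ ≤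
      ‖φ₂ y‖ * exp (∫ t in Ι y x, ‖L₁ t‖ + ‖L₂ t‖) * ∫ t in Ι y x, ‖L₁ t - L₂ t‖ := by
  set C := ‖φ₂ y‖ * exp (∫ t in Ι y x, ‖L₂ t‖)
  have hφ₂_le : ∀ t ∈ uIcc y x, ‖φ₂ t‖ ≤ C := fun t ht ↦ by
    have hsub := uIcc_subset_uIcc_left ht
    calc ‖φ₂ t‖ ≤ (‖φ₂ y‖ + ∫ _ in Ι y t, (0 : ℝ)) * exp (∫ s in Ι y t, ‖L₂ s‖) := by
          refine norm_le_mul_exp_of_norm_deriv_le (fun r hr ↦ hφ₂ r (hsub hr))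
            (hφ₂'.mono_set hsub) (fun _ ↦ norm_nonneg _) (hL₂.mono_set hsub) (fun _ ↦ le_rfl)
            intervalIntegrable_const ?_
          filter_upwards [h₂] with s hs
          simpa [hs] using (L₂ s).le_opNorm (φ₂ s)
      _ ≤ C := by
          simp only [integral_zero, add_zero, C]
          exact mul_le_mul_of_nonneg_left (exp_le_exp.mpr (setIntegral_mono_set hL₂.def'
            (.of_forall fun _ ↦ norm_nonneg _)
            (uIoc_subset_uIoc_of_uIcc_subset_uIcc hsub).eventuallyLE)) (norm_nonneg _)
  have hdiff : ∀ t ∈ uIcc y x, (φ₁ - φ₂) t - (φ₁ - φ₂) y = ∫ s in y..t, (φ₁' - φ₂') s := by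
    intro t ht
    have hsub := uIcc_subset_uIcc_left ht
    simp only [Pi.sub_apply]
    rw [intervalIntegral.integral_sub (hφ₁'.mono_set hsub) (hφ₂'.mono_set hsub), ← hφ₁ t ht,
      ← hφ₂ t ht]
    abel
  have hφ₂_cont := continuous_norm.comp_continuousOn (continuousOn_of_sub_eq_integral hφ₂ hφ₂')
  have hbound : ∀ᵐ s, ‖(φ₁' - φ₂') s‖ ≤ ‖L₁ s‖ * ‖(φ₁ - φ₂) s‖ + ‖L₁ s - L₂ s‖ * ‖φ₂ s‖ := by
    filter_upwards [h₁, h₂] with s hs₁ hs₂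
    have hsplit : (φ₁' - φ₂') s = L₁ s ((φ₁ - φ₂) s) + (L₁ s - L₂ s) (φ₂ s) := by
      simp only [Pi.sub_apply, hs₁, hs₂, map_sub, _root_.sub_apply]
      abel
    rw [hsplit]
    exact (norm_add_le _ _).trans (add_le_add ((L₁ s).le_opNorm _) ((L₁ s - L₂ s).le_opNorm _))
  have hb : ∫ s in Ι y x, ‖L₁ s - L₂ s‖ * ‖φ₂ s‖ ≤ C * ∫ s in Ι y x, ‖L₁ s - L₂ s‖ := by
    rw [← MeasureTheory.integral_const_mul]
    refine setIntegral_mono_on (hL.mul_continuousOn hφ₂_cont).def' (hL.def'.const_mul C)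
      measurableSet_uIoc fun s hs ↦ ?_
    rw [mul_comm C]
    exact mul_le_mul_of_nonneg_left (hφ₂_le s (uIoc_subset_uIcc hs)) (norm_nonneg _)
  have key := norm_le_mul_exp_of_norm_deriv_le hdiff (hφ₁'.sub hφ₂') (fun _ ↦ norm_nonneg _) hL₁
    (fun _ ↦ mul_nonneg (norm_nonneg _) (norm_nonneg _)) (hL.mul_continuousOn hφ₂_cont) hbound
  rw [Pi.sub_apply, Pi.sub_apply, hy, sub_self, norm_zero, zero_add] at key
  calc ‖φ₁ x - φ₂ x‖
      ≤ (∫ s in Ι y x, ‖L₁ s - L₂ s‖ * ‖φ₂ s‖) * exp (∫ s in Ι y x, ‖L₁ s‖) := key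
    _ ≤ (C * ∫ s in Ι y x, ‖L₁ s - L₂ s‖) * exp (∫ s in Ι y x, ‖L₁ s‖) := by gcongr
    _ = _ := by rw [integral_add hL₁.def' hL₂.def', exp_add]; ring

end LinearODE

theorem Jc_conjTranspose (N : ℕ) : (Jc N)ᴴ = -Jc N := by
  simp [Jc, fromBlocks_conjTranspose, fromBlocks_neg]

theorem Jc_mul_self (N : ℕ) : Jc N * Jc N = -1 := by
  simp [Jc, fromBlocks_multiply, ← fromBlocks_one, fromBlocks_neg]

theorem Jc_mem_unitary (N : ℕ) : Jc N ∈ unitary (Matrix (Fin N ⊕ Fin N) (Fin N ⊕ Fin N) ℂ) := by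
  simp [Unitary.mem_iff, star_eq_conjTranspose, Jc_conjTranspose, Jc_mul_self]

theorem norm_toEuclideanCLM_Jc_mul {N : ℕ} (A : Matrix (Fin N ⊕ Fin N) (Fin N ⊕ Fin N) ℂ) :
    ‖toEuclideanCLM (𝕜 := ℂ) (Jc N * A)‖ = opNorm A := by
  rw [map_mul, CStarRing.norm_mem_unitary_mul _ (Unitary.map_mem _ (Jc_mem_unitary N)), opNorm]

theorem eq_mulVec_of_Jc_mulVec_add_mulVec_eq_zero {N : ℕ}
    {V : Matrix (Fin N ⊕ Fin N) (Fin N ⊕ Fin N) ℂ} {ψ ψ' : Fin N ⊕ Fin N → ℂ}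
    (h : Jc N *ᵥ ψ' + V *ᵥ ψ = 0) : ψ' = (Jc N * V) *ᵥ ψ := by
  have hJ := congrArg (Jc N *ᵥ ·) h
  simp only [mulVec_add, mulVec_mulVec, Jc_mul_self, neg_mulVec, one_mulVec, mulVec_zero] at hJ
  exact neg_add_eq_zero.mp hJ

theorem stmt10_general (N : ℕ)
    (V₁ V₂ : ℝ → Matrix (Fin N ⊕ Fin N) (Fin N ⊕ Fin N) ℂ)
    (ψ₁ ψ₁' ψ₂ ψ₂' : ℝ → (Fin N ⊕ Fin N) → ℂ)
    (hV₁int : ∀ a b : ℝ, IntervalIntegrable (fun t => opNorm (V₁ t)) volume a b)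
    (hV₂int : ∀ a b : ℝ, IntervalIntegrable (fun t => opNorm (V₂ t)) volume a b)
    (hVdiffint : ∀ a b : ℝ, IntervalIntegrable (fun t => opNorm (V₁ t - V₂ t)) volume a b)
    (hψ₁'int : ∀ a b : ℝ, IntervalIntegrable ψ₁' volume a b)
    (hψ₂'int : ∀ a b : ℝ, IntervalIntegrable ψ₂' volume a b)
    (hAC₁ : ∀ a b : ℝ, ψ₁ b - ψ₁ a = ∫ t in a..b, ψ₁' t)
    (hAC₂ : ∀ a b : ℝ, ψ₂ b - ψ₂ a = ∫ t in a..b, ψ₂' t)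
    (hEq₁ : ∀ᵐ t ∂volume, (Jc N).mulVec (ψ₁' t) + (V₁ t).mulVec (ψ₁ t) = 0)
    (hEq₂ : ∀ᵐ t ∂volume, (Jc N).mulVec (ψ₂' t) + (V₂ t).mulVec (ψ₂ t) = 0)
    (y : ℝ) (hy : ψ₁ y = ψ₂ y) (x : ℝ) :
    Real.sqrt (∑ i, ‖ψ₁ x i - ψ₂ x i‖ ^ 2) ≤
      Real.sqrt (∑ i, ‖ψ₂ y i‖ ^ 2) *
        Real.exp (∫ t in min x y..max x y, opNorm (V₁ t) + opNorm (V₂ t)) *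
        ∫ s in min x y..max x y, opNorm (V₁ s - V₂ s) := by
  let e : ((Fin N ⊕ Fin N) → ℂ) →L[ℂ] EuclideanSpace ℂ (Fin N ⊕ Fin N) :=
    (EuclideanSpace.equiv (Fin N ⊕ Fin N) ℂ).symm
  have he_int {f : ℝ → (Fin N ⊕ Fin N) → ℂ} (hf : IntervalIntegrable f volume y x) :
      IntervalIntegrable (e ∘ f) volume y x :=
    ⟨e.integrable_comp hf.1, e.integrable_comp hf.2⟩
  have he_AC {ψ ψ' : ℝ → (Fin N ⊕ Fin N) → ℂ} (hψ' : ∀ a b : ℝ, IntervalIntegrable ψ' volume a b)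
      (hAC : ∀ a b : ℝ, ψ b - ψ a = ∫ t in a..b, ψ' t) (t : ℝ) :
      e (ψ t) - e (ψ y) = ∫ s in y..t, e (ψ' s) := by
    rw [← map_sub, hAC, e.intervalIntegral_comp_comm (hψ' y t)]
  have hI (f : ℝ → ℝ) : ∫ t in min x y..max x y, f t = ∫ t in Ι y x, f t := by
    rw [integral_of_le min_le_max, uIoc_comm]
    rfl
  have key := norm_sub_le_of_linear_ode (φ₁ := e ∘ ψ₁) (φ₂ := e ∘ ψ₂)
    (L₁ := fun t ↦ toEuclideanCLM (𝕜 := ℂ) (Jc N * V₁ t))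
    (L₂ := fun t ↦ toEuclideanCLM (𝕜 := ℂ) (Jc N * V₂ t))
    (fun t _ ↦ he_AC hψ₁'int hAC₁ t) (fun t _ ↦ he_AC hψ₂'int hAC₂ t)
    (he_int (hψ₁'int y x)) (he_int (hψ₂'int y x))
    (by simpa only [norm_toEuclideanCLM_Jc_mul] using hV₁int y x)
    (by simpa only [norm_toEuclideanCLM_Jc_mul] using hV₂int y x)
    (by simpa only [← map_sub, ← mul_sub, norm_toEuclideanCLM_Jc_mul] using hVdiffint y x)
    (by filter_upwards [hEq₁] with t ht
        exact congrArg e (eq_mulVec_of_Jc_mulVec_add_mulVec_eq_zero ht))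
    (by filter_upwards [hEq₂] with t ht
        exact congrArg e (eq_mulVec_of_Jc_mulVec_add_mulVec_eq_zero ht))
    (congrArg e hy)
  simp only [Function.comp_apply, ← map_sub, ← mul_sub, norm_toEuclideanCLM_Jc_mul] at key
  rw [hI, hI]
  simpa [e, EuclideanSpace.norm_eq] using key

/-- if `ψ₁, ψ₂` solve `Jψᵢ' + Vᵢψᵢ = 0` and agree at `y`, then
`|ψ₁(x) - ψ₂(x)| ≤ |ψ₂(y)| exp(∫(‖V₁‖+‖V₂‖)) ∫‖V₁ - V₂‖` (integrals on `[min(x,y), max(x,y)]`).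
The solutions are encoded as absolutely continuous functions with a.e. derivatives. -/
theorem stmt10 (N : ℕ) (hN : 1 ≤ N)
    (V₁ V₂ : ℝ → Matrix (Fin N ⊕ Fin N) (Fin N ⊕ Fin N) ℂ)
    (ψ₁ ψ₁' ψ₂ ψ₂' : ℝ → (Fin N ⊕ Fin N) → ℂ)
    (hV₁int : ∀ a b : ℝ, IntervalIntegrable (fun t => opNorm (V₁ t)) volume a b)
    (hV₂int : ∀ a b : ℝ, IntervalIntegrable (fun t => opNorm (V₂ t)) volume a b)
    (hVdiffint : ∀ a b : ℝ, IntervalIntegrable (fun t => opNorm (V₁ t - V₂ t)) volume a b)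
    (hψ₁'int : ∀ a b : ℝ, IntervalIntegrable ψ₁' volume a b)
    (hψ₂'int : ∀ a b : ℝ, IntervalIntegrable ψ₂' volume a b)
    (hAC₁ : ∀ a b : ℝ, ψ₁ b - ψ₁ a = ∫ t in a..b, ψ₁' t)
    (hAC₂ : ∀ a b : ℝ, ψ₂ b - ψ₂ a = ∫ t in a..b, ψ₂' t)
    (hEq₁ : ∀ᵐ t ∂volume, (Jc N).mulVec (ψ₁' t) + (V₁ t).mulVec (ψ₁ t) = 0)
    (hEq₂ : ∀ᵐ t ∂volume, (Jc N).mulVec (ψ₂' t) + (V₂ t).mulVec (ψ₂ t) = 0)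
    (y : ℝ) (hy : ψ₁ y = ψ₂ y) (x : ℝ) :
    Real.sqrt (∑ i, ‖ψ₁ x i - ψ₂ x i‖ ^ 2) ≤
      Real.sqrt (∑ i, ‖ψ₂ y i‖ ^ 2) *
        Real.exp (∫ t in min x y..max x y, opNorm (V₁ t) + opNorm (V₂ t)) *
        ∫ s in min x y..max x y, opNorm (V₁ s - V₂ s) :=
  stmt10_general N V₁ V₂ ψ₁ ψ₁' ψ₂ ψ₂' hV₁int hV₂int hVdiffint hψ₁'int hψ₂'int hAC₁ hAC₂ hEq₁ hEq₂ y
    hy x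

end
end

section
/- If the Lie subalgebra g of sp_N(R) contains all matrices Z_{ij} = [[0, E_{ij}+E_{ji}],[E_{ij}+E_{ji}, 0]] and Y_{ij} = [[0, E_{ij}+E_{ji}],[-(E_{ij}+E_{ji}), 0]] for all i, j with |i-j| ≤ 1, then g = sp_N(R). -/
/-!
Write `X ∈ sp_N` as `D(A) + U(B) + L(C)` with `D(A) = [[A,0],[0,-Aᵀ]]`, `U(B) = [[0,B],[0,0]]`
and `L(C) = [[0,0],[C,0]]`. The generators give `U(S_ij)` and `L(S_ij)` for adjacent `i, j`,
where `S_ij = E_ij + E_ji`. Since `[U(B), L(C)] = D(BC)` we get `D(E_ij)` for adjacent indices, and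
as `D` is a Lie homomorphism, `[E_ij, E_jk] = E_ik` spreads this along chains to all of `gl_N`.
Finally `[D(E_ij), U(S_jj)] = 2 U(S_ij)`, likewise for `L`, and the `S_ij` span the symmetric
matrices.
-/

open Matrix

attribute [local instance 100] LieRing.ofAssociativeRing

noncomputable section

/-- The Lie algebra `sp_N(ℝ)` of matrices `[[A,B],[C,-Aᵀ]]` with `B`, `C` symmetric,
as a set of `2N×2N` real matrices. -/
def spSet (N : ℕ) : Set (Matrix (Fin N ⊕ Fin N) (Fin N ⊕ Fin N) ℝ) :=
  {X | ∃ A B C : Matrix (Fin N) (Fin N) ℝ, Bᵀ = B ∧ Cᵀ = C ∧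
    X = Matrix.fromBlocks A B C (-Aᵀ)}

/-- `Z_{ij} = [[0, E_{ij}+E_{ji}],[E_{ij}+E_{ji}, 0]]`. -/
def Zmat (N : ℕ) (i j : Fin N) : Matrix (Fin N ⊕ Fin N) (Fin N ⊕ Fin N) ℝ :=
  Matrix.fromBlocks 0 (Matrix.single i j 1 + Matrix.single j i 1)
    (Matrix.single i j 1 + Matrix.single j i 1) 0

/-- `Y_{ij} = [[0, E_{ij}+E_{ji}],[-(E_{ij}+E_{ji}), 0]]`. -/
def Ymat (N : ℕ) (i j : Fin N) : Matrix (Fin N ⊕ Fin N) (Fin N ⊕ Fin N) ℝ :=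
  Matrix.fromBlocks 0 (Matrix.single i j 1 + Matrix.single j i 1)
    (-(Matrix.single i j 1 + Matrix.single j i 1)) 0

section Blocks

variable {R n : Type*} [CommRing R]

def spUpper : Matrix n n R →ₗ[R] Matrix (n ⊕ n) (n ⊕ n) R where
  toFun B := fromBlocks 0 B 0 0
  map_add' B B' := by simp [fromBlocks_add]
  map_smul' c B := by simp [fromBlocks_smul]

@[simp] lemma spUpper_apply (B : Matrix n n R) : spUpper B = fromBlocks 0 B 0 0 := rfl

def spLower : Matrix n n R →ₗ[R] Matrix (n ⊕ n) (n ⊕ n) R where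
  toFun C := fromBlocks 0 0 C 0
  map_add' C C' := by simp [fromBlocks_add]
  map_smul' c C := by simp [fromBlocks_smul]

@[simp] lemma spLower_apply (C : Matrix n n R) : spLower C = fromBlocks 0 0 C 0 := rfl

variable [Fintype n] [DecidableEq n]

def spDiag : Matrix n n R →ₗ⁅R⁆ Matrix (n ⊕ n) (n ⊕ n) R where
  toFun A := fromBlocks A 0 0 (-Aᵀ)
  map_add' A A' := by simp [fromBlocks_add, add_comm]
  map_smul' c A := by simp [fromBlocks_smul]
  map_lie' := by
    simp [Ring.lie_def, fromBlocks_multiply, sub_eq_add_neg, fromBlocks_neg, fromBlocks_add]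

@[simp] lemma spDiag_apply (A : Matrix n n R) : spDiag A = fromBlocks A 0 0 (-Aᵀ) := rfl

lemma fromBlocks_eq_spDiag_add_spUpper_add_spLower (A B C : Matrix n n R) :
    fromBlocks A B C (-Aᵀ) = spDiag A + spUpper B + spLower C := by
  simp [fromBlocks_add]

lemma lie_spDiag_spUpper (A B : Matrix n n R) :
    ⁅spDiag A, spUpper B⁆ = spUpper (A * B + B * Aᵀ) := by
  simp [Ring.lie_def, fromBlocks_multiply, sub_eq_add_neg, fromBlocks_neg, fromBlocks_add]

lemma lie_spDiag_spLower (A C : Matrix n n R) :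
    ⁅spDiag A, spLower C⁆ = -spLower (Aᵀ * C + C * A) := by
  simp [Ring.lie_def, fromBlocks_multiply, sub_eq_add_neg, fromBlocks_neg, fromBlocks_add, add_comm]

lemma lie_spUpper_spLower {B C : Matrix n n R} (hB : Bᵀ = B) (hC : Cᵀ = C) :
    ⁅spUpper B, spLower C⁆ = spDiag (B * C) := by
  simp [Ring.lie_def, fromBlocks_multiply, sub_eq_add_neg, fromBlocks_neg, fromBlocks_add,
    transpose_mul, hB, hC]

end Blocks

section SymmSingle

variable {R n : Type*} [CommRing R] [DecidableEq n]

def symmSingle (i j : n) : Matrix n n R := single i j 1 + single j i 1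

lemma transpose_symmSingle (i j : n) : (symmSingle i j : Matrix n n R)ᵀ = symmSingle i j := by
  simp [symmSingle, add_comm]

variable [Fintype n]

lemma lie_single_single_of_ne {i k : n} (j : n) (hik : i ≠ k) :
    ⁅(single i j 1 : Matrix n n R), single j k (1 : R)⁆ = single i k 1 := by
  rw [Ring.lie_def, single_mul_single_same, single_mul_single_of_ne (h := hik.symm), mul_one,
    sub_zero]

lemma symmSingle_mul_symmSingle_self (i j : n) :
    (symmSingle i j * symmSingle j j : Matrix n n R) =
      (if i = j then 4 else 2 : R) • single i j 1 := by
  split_ifs with hij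
  · subst hij
    simp only [symmSingle, add_mul, mul_add, single_mul_single_same, smul_single, ← single_add]
    norm_num
  · simp [symmSingle, add_mul, mul_add, hij, ← single_add]
    norm_num

lemma single_mul_symmSingle_add_symmSingle_mul_transpose (i j : n) :
    (single i j 1 * symmSingle j j + symmSingle j j * (single i j 1)ᵀ : Matrix n n R) =
      (2 : R) • symmSingle i j := by
  simp [symmSingle, mul_add, ← single_add]
  norm_num

end SymmSingle

lemma Matrix.submodule_eq_top_of_single_mem {R m n : Type*} [Semiring R] [Fintype m] [Finite n]
    [DecidableEq m] [DecidableEq n] {p : Submodule R (Matrix m n R)}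
    (h : ∀ i j, single i j 1 ∈ p) : p = ⊤ := by
  rw [eq_top_iff, ← (stdBasis R m n).span_eq, Submodule.span_le]
  rintro _ ⟨⟨i, j⟩, rfl⟩
  rw [stdBasis_eq_single]
  exact h i j

lemma LieSubalgebra.eq_top_of_adjacent_single_mem {R : Type*} [CommRing R] {N : ℕ}
    (L : LieSubalgebra R (Matrix (Fin N) (Fin N) R))
    (h : ∀ i j : Fin N, (i : ℕ) ≤ j + 1 → (j : ℕ) ≤ i + 1 → single i j 1 ∈ L) : L = ⊤ := by
  have key : ∀ d (i j : Fin N), (j : ℕ) = i + d → single i j 1 ∈ L ∧ single j i 1 ∈ L := by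
    intro d
    induction d with
    | zero => exact fun i j hij ↦ ⟨h i j (by omega) (by omega), h j i (by omega) (by omega)⟩
    | succ d ih =>
      intro i j hij
      let m : Fin N := ⟨i + 1, by omega⟩
      have hm : (m : ℕ) = i + 1 := rfl
      have hne : i ≠ j := Fin.ne_of_val_ne (by omega)
      obtain ⟨hmj, hjm⟩ := ih m j (by omega)
      constructor
      · rw [← lie_single_single_of_ne m hne]
        exact L.lie_mem (h i m (by omega) (by omega)) hmj
      · rw [← lie_single_single_of_ne m hne.symm]
        exact L.lie_mem hjm (h m i (by omega) (by omega))
  rw [← LieSubalgebra.toSubmodule_eq_top]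
  refine Matrix.submodule_eq_top_of_single_mem fun i j ↦ ?_
  rcases le_total (i : ℕ) j with hij | hji
  · exact (key (j - i) i j (by omega)).1
  · exact (key (i - j) j i (by omega)).2

section Generation

variable {K : Type*} [Field K] [NeZero (2 : K)]

lemma mem_of_symmSingle_mem {n M : Type*} [Fintype n] [DecidableEq n] [AddCommGroup M]
    [Module K M] {p : Submodule K M} {f : Matrix n n K →ₗ[K] M}
    (h : ∀ i j, f (symmSingle i j) ∈ p) {B : Matrix n n K} (hB : Bᵀ = B) : f B ∈ p := by
  let symmetrize : Matrix n n K →ₗ[K] Matrix n n K :=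
    LinearMap.id + (transposeLinearEquiv n n K K).toLinearMap
  have htop : p.comap (f ∘ₗ symmetrize) = ⊤ :=
    Matrix.submodule_eq_top_of_single_mem fun i j ↦ by simpa [symmetrize, symmSingle] using h i j
  have hB2 : f ((2 : K) • B) ∈ p := by
    have hB' : B ∈ p.comap (f ∘ₗ symmetrize) := htop ▸ Submodule.mem_top
    simpa [symmetrize, hB, two_smul] using hB'
  rwa [map_smul, Submodule.smul_mem_iff _ two_ne_zero] at hB2

variable {N : ℕ} {g : LieSubalgebra K (Matrix (Fin N ⊕ Fin N) (Fin N ⊕ Fin N) K)}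

lemma spDiag_mem_of_adjacent
    (hU : ∀ i j : Fin N, (i : ℕ) ≤ j + 1 → (j : ℕ) ≤ i + 1 → spUpper (symmSingle i j) ∈ g)
    (hL : ∀ i j : Fin N, (i : ℕ) ≤ j + 1 → (j : ℕ) ≤ i + 1 → spLower (symmSingle i j) ∈ g)
    (A : Matrix (Fin N) (Fin N) K) : spDiag A ∈ g := by
  suffices g.comap spDiag = ⊤ by
    change A ∈ g.comap spDiag
    exact this ▸ LieSubalgebra.mem_top A
  refine LieSubalgebra.eq_top_of_adjacent_single_mem _ fun i j hij hji ↦ ?_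
  have hc : (if i = j then 4 else 2 : K) ≠ 0 := by
    split_ifs
    · rw [show (4 : K) = 2 * 2 by norm_num]
      exact mul_ne_zero two_ne_zero two_ne_zero
    · exact two_ne_zero
  have hmem := g.lie_mem (hU i j hij hji) (hL j j (by omega) (by omega))
  rw [lie_spUpper_spLower (transpose_symmSingle i j) (transpose_symmSingle j j),
    symmSingle_mul_symmSingle_self, map_smul] at hmem
  exact (Submodule.smul_mem_iff g.toSubmodule hc).1 hmem

lemma spUpper_mem_of_spDiag_mem (hD : ∀ A, spDiag A ∈ g)
    (hU : ∀ j, spUpper (symmSingle j j) ∈ g) {B : Matrix (Fin N) (Fin N) K} (hB : Bᵀ = B) :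
    spUpper B ∈ g := by
  refine mem_of_symmSingle_mem (p := g.toSubmodule) (fun i j ↦ ?_) hB
  have hmem := g.lie_mem (hD (single i j 1)) (hU j)
  rw [lie_spDiag_spUpper, single_mul_symmSingle_add_symmSingle_mul_transpose, map_smul] at hmem
  exact (Submodule.smul_mem_iff g.toSubmodule two_ne_zero).1 hmem

lemma spLower_mem_of_spDiag_mem (hD : ∀ A, spDiag A ∈ g)
    (hL : ∀ j, spLower (symmSingle j j) ∈ g) {C : Matrix (Fin N) (Fin N) K} (hC : Cᵀ = C) :
    spLower C ∈ g := by
  refine mem_of_symmSingle_mem (p := g.toSubmodule) (fun i j ↦ ?_) hC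
  have hmem := g.lie_mem (hD (single i j 1)ᵀ) (hL j)
  rw [lie_spDiag_spLower, transpose_transpose, single_mul_symmSingle_add_symmSingle_mul_transpose,
    map_smul, ← neg_smul] at hmem
  exact (Submodule.smul_mem_iff g.toSubmodule (neg_ne_zero.2 two_ne_zero)).1 hmem

theorem fromBlocks_mem_of_adjacent
    (hU : ∀ i j : Fin N, (i : ℕ) ≤ j + 1 → (j : ℕ) ≤ i + 1 → spUpper (symmSingle i j) ∈ g)
    (hL : ∀ i j : Fin N, (i : ℕ) ≤ j + 1 → (j : ℕ) ≤ i + 1 → spLower (symmSingle i j) ∈ g)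
    {A B C : Matrix (Fin N) (Fin N) K} (hB : Bᵀ = B) (hC : Cᵀ = C) :
    fromBlocks A B C (-Aᵀ) ∈ g := by
  have hD := spDiag_mem_of_adjacent hU hL
  rw [fromBlocks_eq_spDiag_add_spUpper_add_spLower]
  refine add_mem (add_mem (hD A) ?_) ?_
  · exact spUpper_mem_of_spDiag_mem hD (fun j ↦ hU j j (by omega) (by omega)) hB
  · exact spLower_mem_of_spDiag_mem hD (fun j ↦ hL j j (by omega) (by omega)) hC

end Generation

section ZY

variable {N : ℕ} (i j : Fin N)

lemma Zmat_eq_spUpper_add_spLower :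
    Zmat N i j = spUpper (symmSingle i j) + spLower (symmSingle i j) := by
  simp [Zmat, symmSingle, fromBlocks_add]

lemma Ymat_eq_spUpper_sub_spLower :
    Ymat N i j = spUpper (symmSingle i j) - spLower (symmSingle i j) := by
  simp [Ymat, symmSingle, sub_eq_add_neg, fromBlocks_neg, fromBlocks_add]

lemma spUpper_symmSingle_eq :
    spUpper (symmSingle i j) = (2 : ℝ)⁻¹ • (Zmat N i j + Ymat N i j) := by
  rw [Zmat_eq_spUpper_add_spLower, Ymat_eq_spUpper_sub_spLower]
  module

lemma spLower_symmSingle_eq :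
    spLower (symmSingle i j) = (2 : ℝ)⁻¹ • (Zmat N i j - Ymat N i j) := by
  rw [Zmat_eq_spUpper_add_spLower, Ymat_eq_spUpper_sub_spLower]
  module

end ZY

theorem stmt16_general (N : ℕ)
    (g : LieSubalgebra ℝ (Matrix (Fin N ⊕ Fin N) (Fin N ⊕ Fin N) ℝ))
    (hsub : (g : Set (Matrix (Fin N ⊕ Fin N) (Fin N ⊕ Fin N) ℝ)) ⊆ spSet N)
    (hZY : ∀ i j : Fin N, (i : ℕ) ≤ (j : ℕ) + 1 → (j : ℕ) ≤ (i : ℕ) + 1 →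
      Zmat N i j ∈ g ∧ Ymat N i j ∈ g) :
    (g : Set (Matrix (Fin N ⊕ Fin N) (Fin N ⊕ Fin N) ℝ)) = spSet N := by
  refine hsub.antisymm ?_
  rintro _ ⟨A, B, C, hB, hC, rfl⟩
  refine fromBlocks_mem_of_adjacent (fun i j hij hji ↦ ?_) (fun i j hij hji ↦ ?_) hB hC
  · rw [spUpper_symmSingle_eq]
    exact g.smul_mem _ (add_mem (hZY i j hij hji).1 (hZY i j hij hji).2)
  · rw [spLower_symmSingle_eq]
    exact g.smul_mem _ (sub_mem (hZY i j hij hji).1 (hZY i j hij hji).2)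

/-- if a Lie subalgebra `g ⊆ sp_N(ℝ)` contains all the `Z_{ij}` and `Y_{ij}`
with `|i-j| ≤ 1`, then `g = sp_N(ℝ)`. -/
theorem stmt16 (N : ℕ) (hN : 1 ≤ N)
    (g : LieSubalgebra ℝ (Matrix (Fin N ⊕ Fin N) (Fin N ⊕ Fin N) ℝ))
    (hsub : (g : Set (Matrix (Fin N ⊕ Fin N) (Fin N ⊕ Fin N) ℝ)) ⊆ spSet N)
    (hZY : ∀ i j : Fin N, (i : ℕ) ≤ (j : ℕ) + 1 → (j : ℕ) ≤ (i : ℕ) + 1 →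
      Zmat N i j ∈ g ∧ Ymat N i j ∈ g) :
    (g : Set (Matrix (Fin N ⊕ Fin N) (Fin N ⊕ Fin N) ℝ)) = spSet N :=
  stmt16_general N g hsub hZY

end
end

section
/- Let M ∈ SpO_N(R). Then the singular values of M all have multiplicity at least 2: there exist t₁ ≥ … ≥ t_d ≥ 0 (with N = 2d or N = 2d+1) such that the multiset of singular values of M is {e^{t₁}, e^{t₁}, …, e^{t_d}, e^{t_d}, e^{-t₁}, e^{-t₁}, …, e^{-t_d}, e^{-t_d}} together with {1, 1} if N is odd. -/
/-!
With `A = MᵀM`, the relations `MᵀJM = J` and `MᵀSM = S` give `AJA = J` and `ASA = S`, so `A`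
commutes with `Q = JS`, and `Q² = -1`. Each eigenspace of `A` is therefore `Q`-stable and carries
a complex structure, so it has even dimension; and `AJA = J` makes `A - μ⁻¹` equivalent to
`A - μ`, so `μ` and `μ⁻¹` have the same multiplicity. Half the logarithms of the (positive)
eigenvalues of `A` thus form a multiset that is symmetric under negation and has even
multiplicities, and such a multiset is a union of blocks `{t, t, -t, -t}` with `t ≥ 0`, plus
`{0, 0}` when its size is `2 mod 4`.
-/

open Matrix

namespace Multiset

variable {α : Type*}

theorem exists_eq_add_self_of_even_count [DecidableEq α] {m : Multiset α}
    (h : ∀ a, Even (m.count a)) : ∃ p, m = p + p := by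
  refine ⟨Finsupp.toMultiset (m.toFinsupp.mapRange (· / 2) (Nat.zero_div 2)), ext.mpr fun a => ?_⟩
  obtain ⟨r, hr⟩ := h a
  simp only [hr, count_add, Finsupp.count_toMultiset, Finsupp.mapRange_apply, toFinsupp_apply]
  omega

theorem exists_antitone_map_univ_eq [LinearOrder α] (s : Multiset α) :
    ∃ t : Fin (card s) → α, Antitone t ∧ Finset.univ.val.map t = s := by
  set l := s.sort (· ≥ ·)
  have hl : l.length = card s := length_sort _
  refine ⟨fun i => l.get (i.cast hl.symm), fun i j hij => ?_, ?_⟩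
  · exact (List.sortedGE_iff_pairwise.mpr (pairwise_sort s (· ≥ ·))).antitone_get hij
  · rw [Fin.univ_val_map, ← List.ofFn_congr hl l.get, List.ofFn_get, sort_eq]

theorem bind_quadruple [AddCommGroup α] (s : Multiset α) :
    (s.bind fun a => ({a, a, -a, -a} : Multiset α)) = s + s + s.map Neg.neg + s.map Neg.neg := by
  have hs : s.bind singleton = s := by simpa using bind_singleton s id
  simp only [insert_eq_cons, ← singleton_add, bind_add, bind_singleton, hs]
  abel

section LinearOrderedAddCommGroup

variable [AddCommGroup α] [LinearOrder α] [IsOrderedAddMonoid α]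

theorem eq_filter_pos_add_map_neg_add_replicate {m : Multiset α}
    (h : ∀ a, m.count (-a) = m.count a) :
    m = m.filter (0 < ·) + (m.filter (0 < ·)).map Neg.neg + replicate (m.count 0) 0 := by
  refine ext.mpr fun a => ?_
  have hneg : count a ((m.filter (0 < ·)).map Neg.neg) = count (-a) (m.filter (0 < ·)) := by
    simpa using count_map_eq_count' Neg.neg (m.filter (0 < ·)) neg_injective (-a)
  rw [count_add, count_add, hneg, count_filter, count_filter, count_replicate, h]
  rcases lt_trichotomy a 0 with ha | rfl | ha
  · simp [ha, ha.not_gt, ha.ne']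
  · simp
  · simp [ha, ha.ne, (neg_neg_of_pos ha).not_gt]

theorem exists_antitone_nonneg_eq_bind_quadruple (n : ℕ) {m : Multiset α}
    (hcard : card m = 2 * n) (hneg : ∀ a, m.count (-a) = m.count a)
    (heven : ∀ a, Even (m.count a)) :
    ∃ (d : ℕ) (t : Fin d → α), (n = 2 * d ∨ n = 2 * d + 1) ∧ (∀ i, 0 ≤ t i) ∧ Antitone t ∧
      m = ((Finset.univ.val.map t).bind fun a => ({a, a, -a, -a} : Multiset α)) +
        if n = 2 * d + 1 then {0, 0} else 0 := by
  obtain ⟨p, rfl⟩ := exists_eq_add_self_of_even_count heven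
  have hp : ∀ a, p.count (-a) = p.count a := fun a => by
    have := hneg a
    rw [count_add, count_add] at this
    omega
  have hdecomp := eq_filter_pos_add_map_neg_add_replicate hp
  set q := p.filter (0 < ·)
  obtain ⟨j, hj⟩ : ∃ j, p.count 0 = 2 * j ∨ p.count 0 = 2 * j + 1 := Nat.even_or_odd' _
  obtain ⟨t, ht, hmap⟩ := exists_antitone_map_univ_eq (q + replicate j 0)
  have hn : n = 2 * card q + p.count 0 := by
    have := congrArg card hdecomp
    rw [card_add] at hcard
    simp only [card_add, card_map, card_replicate] at this
    omega
  refine ⟨_, t, by simp only [card_add, card_replicate]; omega, fun i => ?_, ht, ?_⟩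
  · have hi : t i ∈ q + replicate j 0 := hmap ▸ mem_map_of_mem _ (Finset.mem_univ_val i)
    rcases mem_add.mp hi with hi | hi
    · exact (mem_filter.mp hi).2.le
    · exact (eq_of_mem_replicate hi).ge
  · have hzero : (replicate j (0 : α)).map Neg.neg = replicate j 0 := by simp
    rw [hmap, bind_quadruple, map_add, hzero]
    conv_lhs => rw [hdecomp]
    simp only [card_add, card_replicate]
    rcases hj with hj | hj
    · rw [if_neg (by omega), hj, two_mul, replicate_add]
      abel
    · have h00 : ({0, 0} : Multiset α) = replicate 1 0 + replicate 1 0 := rfl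
      rw [if_pos (by omega), hj, replicate_add, two_mul, replicate_add, h00]
      abel

end LinearOrderedAddCommGroup

theorem exists_antitone_nonneg_map_sqrt_eq (N : ℕ) {E : Multiset ℝ}
    (hcard : card E = 2 * N) (hpos : ∀ x ∈ E, 0 < x) (hinv : ∀ x, E.count x⁻¹ = E.count x)
    (heven : ∀ x, Even (E.count x)) :
    ∃ (d : ℕ) (t : Fin d → ℝ), (N = 2 * d ∨ N = 2 * d + 1) ∧ (∀ i, 0 ≤ t i) ∧ Antitone t ∧
      E.map Real.sqrt = ((Finset.univ.val.map t).bind fun a =>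
          ({Real.exp a, Real.exp a, Real.exp (-a), Real.exp (-a)} : Multiset ℝ)) +
        if N = 2 * d + 1 then {1, 1} else 0 := by
  set L := E.map fun x => Real.log x / 2
  have hE : E = L.map fun a => Real.exp (2 * a) := by
    rw [map_map]
    conv_lhs => rw [← map_id E]
    exact map_congr rfl fun x hx => by simp [mul_div_cancel₀, Real.exp_log (hpos x hx)]
  have hcount : ∀ a, L.count a = E.count (Real.exp (2 * a)) := fun a => by
    rw [hE]
    exact (count_map_eq_count' _ L
      (Real.exp_injective.comp (mul_right_injective₀ two_ne_zero)) a).symm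
  obtain ⟨d, t, hd, ht0, ht, hL⟩ := exists_antitone_nonneg_eq_bind_quadruple N (m := L)
    (by rwa [card_map]) (fun a => by rw [hcount, hcount, mul_neg, Real.exp_neg, hinv])
    (fun a => hcount a ▸ heven _)
  refine ⟨d, t, hd, ht0, ht, ?_⟩
  have hsqrt : E.map Real.sqrt = L.map Real.exp := by
    rw [map_map]
    exact map_congr rfl fun x hx => by
      simp [← Real.log_sqrt (hpos x hx).le, Real.exp_log (Real.sqrt_pos.mpr (hpos x hx))]
  rw [hsqrt, hL, map_add, map_bind]
  congr 1
  split_ifs <;> simp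

end Multiset

theorem Module.End.even_finrank_of_mul_self_eq_neg_one {K V : Type*} [Field K] [LinearOrder K]
    [IsStrictOrderedRing K] [AddCommGroup V] [Module K V] [FiniteDimensional K V]
    {f : Module.End K V} (hf : f * f = -1) : Even (Module.finrank K V) := by
  have hdet : LinearMap.det f * LinearMap.det f = (-1) ^ Module.finrank K V := by
    rw [← map_mul, hf, ← neg_one_smul K 1, LinearMap.det_smul, map_one, mul_one]
  by_contra hodd
  rw [Nat.not_even_iff_odd.mp hodd |>.neg_one_pow] at hdet
  nlinarith [mul_self_nonneg (LinearMap.det f)]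

theorem commute_mul_of_mul_mul_eq {S : Type*} [Semigroup S] {a g h : S} (hg : a * g * a = g)
    (hh : a * h * a = h) : Commute a (g * h) :=
  calc a * (g * h) = a * g * (a * h * a) := by rw [hh, mul_assoc]
    _ = a * g * a * h * a := by simp only [mul_assoc]
    _ = g * h * a := by rw [hg]

namespace Matrix

section Square

variable {K n : Type*} [Fintype n] [DecidableEq n]

theorem even_finrank_ker_of_commute [Field K] [LinearOrder K] [IsStrictOrderedRing K]
    {B Q : Matrix n n K} (hQ : Q * Q = -1) (hBQ : Commute B Q) :
    Even (Module.finrank K (LinearMap.ker B.mulVecLin)) := by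
  have hmaps : ∀ v ∈ LinearMap.ker B.mulVecLin, Q.mulVecLin v ∈ LinearMap.ker B.mulVecLin := by
    intro v hv
    simp only [LinearMap.mem_ker, mulVecLin_apply, mulVec_mulVec, hBQ.eq] at hv ⊢
    rw [← mulVec_mulVec, hv, mulVec_zero]
  refine Module.End.even_finrank_of_mul_self_eq_neg_one (f := Q.mulVecLin.restrict hmaps) ?_
  ext v
  simp [mulVec_mulVec, hQ, neg_mulVec]

theorem rank_sub_inv_smul_one [Field K] {A J : Matrix n n K} (hJ : IsUnit J.det)
    (hAJA : A * J * A = J) {μ : K} (hμ : μ ≠ 0) :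
    (A - μ⁻¹ • 1).rank = (A - μ • 1).rank := by
  have hA : IsUnit A.det := by
    have := congrArg det hAJA
    rw [det_mul, det_mul] at this
    exact isUnit_iff_ne_zero.mpr fun h0 => hJ.ne_zero (by rw [← this, h0, mul_zero])
  have hconj : J * (1 - μ • A) = (A - μ • 1) * (J * A) := by
    rw [mul_sub, sub_mul, mul_one, Matrix.mul_smul, smul_mul, one_mul, ← mul_assoc, hAJA]
  have hscale : A - μ⁻¹ • 1 = (-μ⁻¹) • (1 - μ • A) := by
    rw [smul_sub, smul_smul, neg_mul, inv_mul_cancel₀ hμ]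
    module
  rw [hscale, rank_smul_of_mem_nonZeroDivisors _ (mem_nonZeroDivisors_of_ne_zero (by simpa)),
    ← rank_mul_eq_right_of_isUnit_det J _ hJ, hconj,
    rank_mul_eq_left_of_isUnit_det _ _ (by rw [det_mul]; exact hJ.mul hA)]

theorem mul_mul_transpose_eq_of_mul_eq_one [CommRing K] {M G G' : Matrix n n K}
    (hG : G' * G = 1) (h : Mᵀ * G * M = G) : M * G' * Mᵀ = G' := by
  have hM : M * (G' * Mᵀ * G) = 1 :=
    mul_eq_one_comm.mp (by rw [mul_assoc, mul_assoc, ← mul_assoc Mᵀ, h, hG])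
  calc M * G' * Mᵀ = M * G' * Mᵀ * (G * G') := by rw [mul_eq_one_comm.mp hG, mul_one]
    _ = M * (G' * Mᵀ * G) * G' := by simp only [mul_assoc]
    _ = G' := by rw [hM, one_mul]

theorem transpose_mul_self_mul_mul_transpose_mul_self [Field K] {M G : Matrix n n K} {c : K}
    (hc : c ≠ 0) (hG : G * G = c • 1) (h : Mᵀ * G * M = G) : Mᵀ * M * G * (Mᵀ * M) = G := by
  have hG' : (c⁻¹ • G) * G = 1 := by rw [smul_mul, hG, smul_smul, inv_mul_cancel₀ hc, one_smul]
  have hMGM : M * G * Mᵀ = G := by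
    have := mul_mul_transpose_eq_of_mul_eq_one hG' h
    rw [Matrix.mul_smul, smul_mul] at this
    exact smul_right_injective _ (inv_ne_zero hc) this
  calc Mᵀ * M * G * (Mᵀ * M) = Mᵀ * (M * G * Mᵀ) * M := by simp only [mul_assoc]
    _ = G := by rw [hMGM, h]

end Square

section Blocks

variable {R n : Type*} [CommRing R] [Fintype n] [DecidableEq n]

theorem fromBlocks_zero_neg_one_one_zero_mul_self :
    (fromBlocks 0 (-1) 1 0 : Matrix (n ⊕ n) (n ⊕ n) R) * fromBlocks 0 (-1) 1 0 = -1 := by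
  rw [fromBlocks_multiply, ← fromBlocks_one, fromBlocks_neg]
  simp

theorem commute_fromBlocks_self_zero_zero_self_fromBlocks_zero_neg_one_one_zero (D : Matrix n n R) :
    Commute (fromBlocks D 0 0 D) (fromBlocks 0 (-1) 1 0) := by
  simp [Commute, SemiconjBy, fromBlocks_multiply]

theorem fromBlocks_self_zero_zero_self_mul_self {D : Matrix n n R} (hD : D * D = 1) :
    fromBlocks D 0 0 D * fromBlocks D 0 0 D = 1 := by
  simp [fromBlocks_multiply, hD]

end Blocks

namespace IsHermitian

variable {𝕜 n : Type*} [RCLike 𝕜] [Fintype n] [DecidableEq n]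

theorem count_eigenvalues_add_rank_sub_smul {A : Matrix n n 𝕜} (hA : A.IsHermitian) (μ : ℝ) :
    (Finset.univ.val.map hA.eigenvalues).count μ + (A - (μ : 𝕜) • 1).rank = Fintype.card n := by
  have hdiag : A - (μ : 𝕜) • 1 = Unitary.conjStarAlgAut 𝕜 _ hA.eigenvectorUnitary
      (diagonal (RCLike.ofReal ∘ fun i => hA.eigenvalues i - μ)) := by
    conv_lhs => rw [hA.spectral_theorem]
    rw [← map_one (Unitary.conjStarAlgAut 𝕜 _ hA.eigenvectorUnitary), ← map_smul, ← map_sub]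
    congr 1
    ext i j
    by_cases hij : i = j <;> simp [hij, RCLike.real_smul_eq_coe_mul]
  rw [hdiag, Unitary.conjStarAlgAut_apply, ← Unitary.coe_star,
    rank_mul_eq_left_of_isUnit_det _ _ (UnitaryGroup.det_isUnit _),
    rank_mul_eq_right_of_isUnit_det _ _ (UnitaryGroup.det_isUnit _), rank_diagonal]
  simp only [Function.comp_apply, ne_eq, RCLike.ofReal_eq_zero, sub_eq_zero]
  rw [Fintype.card_subtype_compl, Fintype.card_subtype, Multiset.count_map]
  simp_rw [eq_comm (a := μ)]
  have := Fintype.card_subtype_le (fun i => hA.eigenvalues i = μ)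
  rw [Fintype.card_subtype] at this
  exact Nat.add_sub_of_le this

theorem even_count_eigenvalues_of_commute {A Q : Matrix n n ℝ} (hA : A.IsHermitian)
    (hQ : Q * Q = -1) (hAQ : Commute A Q) (μ : ℝ) :
    Even ((Finset.univ.val.map hA.eigenvalues).count μ) := by
  have hker := even_finrank_ker_of_commute hQ (hAQ.sub_left ((Commute.one_left Q).smul_left μ))
  have hcount := hA.count_eigenvalues_add_rank_sub_smul μ
  have hrank := LinearMap.finrank_range_add_finrank_ker (A - μ • 1).mulVecLin
  rw [RCLike.ofReal_real_eq_id, id] at hcount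
  rw [Module.finrank_fintype_fun_eq_card, ← rank] at hrank
  rwa [show (Finset.univ.val.map hA.eigenvalues).count μ
    = Module.finrank ℝ (LinearMap.ker (A - μ • 1).mulVecLin) by omega]

theorem count_inv_eigenvalues {A J : Matrix n n 𝕜} (hA : A.IsHermitian) (hJ : IsUnit J.det)
    (hAJA : A * J * A = J) (μ : ℝ) :
    (Finset.univ.val.map hA.eigenvalues).count μ⁻¹ =
      (Finset.univ.val.map hA.eigenvalues).count μ := by
  rcases eq_or_ne μ 0 with rfl | hμ
  · simp
  have hrank := rank_sub_inv_smul_one hJ hAJA (μ := (μ : 𝕜)) (by exact_mod_cast hμ)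
  have hcount := hA.count_eigenvalues_add_rank_sub_smul μ
  have hcount_inv := hA.count_eigenvalues_add_rank_sub_smul μ⁻¹
  rw [RCLike.ofReal_inv] at hcount_inv
  omega

theorem eigenvalues_transpose_mul_self_pos {M : Matrix n n ℝ} (hM : (Mᵀ * M).IsHermitian)
    (hMu : IsUnit M) (i : n) : 0 < hM.eigenvalues i := by
  have hpd := PosDef.conjTranspose_mul_self M (mulVec_injective_iff_isUnit.mpr hMu)
  rw [conjTranspose_eq_transpose_of_trivial] at hpd
  exact hpd.eigenvalues_pos i

end IsHermitian

end Matrix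

theorem stmt18_general (N : ℕ)
    (J S M : Matrix (Fin N ⊕ Fin N) (Fin N ⊕ Fin N) ℝ)
    (hJ : J = Matrix.fromBlocks 0 (-1) 1 0)
    (hS : S = Matrix.fromBlocks
      (Matrix.diagonal fun i : Fin N => (-1 : ℝ) ^ ((i : ℕ) + 1)) 0 0
      (Matrix.diagonal fun i : Fin N => (-1 : ℝ) ^ ((i : ℕ) + 1)))
    (h1 : Mᵀ * J * M = J) (h2 : Mᵀ * S * M = S)
    (hM : (Mᵀ * M).IsHermitian) :
    ∃ (d : ℕ) (t : Fin d → ℝ), (N = 2 * d ∨ N = 2 * d + 1) ∧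
      (∀ i, 0 ≤ t i) ∧ Antitone t ∧
      (Finset.univ.val.map fun i : Fin N ⊕ Fin N => Real.sqrt (hM.eigenvalues i)) =
        ((Finset.univ.val.map t).bind fun a =>
          ({Real.exp a, Real.exp a, Real.exp (-a), Real.exp (-a)} : Multiset ℝ)) +
        (if N = 2 * d + 1 then ({1, 1} : Multiset ℝ) else 0) := by
  have hJJ : J * J = -1 := hJ ▸ fromBlocks_zero_neg_one_one_zero_mul_self
  have hSS : S * S = 1 := hS ▸ fromBlocks_self_zero_zero_self_mul_self (by
    rw [diagonal_mul_diagonal, ← diagonal_one]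
    simp [← mul_pow])
  have hSJ : Commute S J :=
    hS ▸ hJ ▸ commute_fromBlocks_self_zero_zero_self_fromBlocks_zero_neg_one_one_zero _
  have hAJ := transpose_mul_self_mul_mul_transpose_mul_self (neg_ne_zero.mpr one_ne_zero)
    (by rwa [neg_one_smul]) h1
  have hAS := transpose_mul_self_mul_mul_transpose_mul_self one_ne_zero (by rwa [one_smul]) h2
  have hQQ : J * S * (J * S) = -1 := by rw [hSJ.mul_mul_mul_comm, hJJ, hSS, mul_one]
  have hJu : IsUnit J.det := isUnit_det_of_left_inverse (B := -J) (by rw [neg_mul, hJJ, neg_neg])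
  have hMinv : -J * Mᵀ * J * M = 1 := by
    rw [mul_assoc, mul_assoc, ← mul_assoc Mᵀ, h1, neg_mul, hJJ, neg_neg]
  have hMu : IsUnit M := (isUnit_iff_isUnit_det M).mpr (isUnit_det_of_left_inverse hMinv)
  have := Multiset.exists_antitone_nonneg_map_sqrt_eq N (by simp [two_mul])
    (fun x hx => by
      obtain ⟨i, -, rfl⟩ := Multiset.mem_map.mp hx
      exact hM.eigenvalues_transpose_mul_self_pos hMu i)
    (hM.count_inv_eigenvalues hJu hAJ)
    (hM.even_count_eigenvalues_of_commute hQQ (commute_mul_of_mul_mul_eq hAJ hAS))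
  rwa [Multiset.map_map] at this

/-- for `M ∈ SpO_N(ℝ)` there exist `t₁ ≥ … ≥ t_d ≥ 0` (with `N = 2d` or
`N = 2d+1`) such that the multiset of singular values of `M` (the square roots of the
eigenvalues of `MᵀM`) is `{e^{t₁}, e^{t₁}, …, e^{t_d}, e^{t_d}, e^{-t₁}, e^{-t₁}, …,
e^{-t_d}, e^{-t_d}}`, together with `{1, 1}` when `N` is odd: in particular every
singular value has multiplicity at least `2`. -/
theorem stmt18 (N : ℕ) (hN : 1 ≤ N)
    (J S M : Matrix (Fin N ⊕ Fin N) (Fin N ⊕ Fin N) ℝ)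
    (hJ : J = Matrix.fromBlocks 0 (-1) 1 0)
    (hS : S = Matrix.fromBlocks
      (Matrix.diagonal fun i : Fin N => (-1 : ℝ) ^ ((i : ℕ) + 1)) 0 0
      (Matrix.diagonal fun i : Fin N => (-1 : ℝ) ^ ((i : ℕ) + 1)))
    (h1 : Mᵀ * J * M = J) (h2 : Mᵀ * S * M = S)
    (hM : (Mᵀ * M).IsHermitian) :
    ∃ (d : ℕ) (t : Fin d → ℝ), (N = 2 * d ∨ N = 2 * d + 1) ∧
      (∀ i, 0 ≤ t i) ∧ Antitone t ∧
      (Finset.univ.val.map fun i : Fin N ⊕ Fin N => Real.sqrt (hM.eigenvalues i)) =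
        ((Finset.univ.val.map t).bind fun a =>
          ({Real.exp a, Real.exp a, Real.exp (-a), Real.exp (-a)} : Multiset ℝ)) +
        (if N = 2 * d + 1 then ({1, 1} : Multiset ℝ) else 0) :=
  stmt18_general N J S M hJ hS h1 h2 hM
end
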